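/- For each fixed N ≥ 1, the set of bond functions b : {0,…,N−1} → ℤ_{>0} such that 1/M_0 + 1/M_1 + ⋯ + 1/M_N ∈ ℤ is finite (where b_{−1} = b_N = 1 and M_i = lcm(b_{i−1}, b_i)). In other words, only finitely many sets of bonds on a totally ordered set of length N satisfy the necessary condition for the discrete LS algebra to be Gorenstein. -/

import Mathlib

/-! The numbers `M_0, …, M_N` are positive integers whose reciprocals sum to an integer in
`[0, N + 1]`. For a fixed target `q > 0`, an `n`-tuple of positive integers with reciprocal sum
`q` has an entry at most `n / q`; fixing that entry leaves an `(n - 1)`-tuple with reciprocal sum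
`q - 1/v`, so by induction there are finitely many such tuples. Hence the `M_i` are bounded, and
so are the bonds, since `b_i ∣ M_{i+1}`. -/

open Finset MvPolynomial

/-- `Mf b i` is `M_i = lcm(b_{i-1}, b_i)`, with the convention `b_{-1} = 1`
(the convention `b_N = 1` is imposed as a hypothesis in the statements). -/
def Mf (b : ℕ → ℕ) (i : ℕ) : ℕ := Nat.lcm (if i = 0 then 1 else b (i - 1)) (b i)

/-- An LS-path of degree `r` over the totally ordered set `{0, …, N}` with bonds `b`:
a function `π : {0,…,N} → ℚ` (modelled as `π : ℕ → ℚ` vanishing above `N`) with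
nonnegative values, integrality `b_j·(π 0 + ⋯ + π j) ∈ ℤ` for all `0 ≤ j ≤ N-1`,
and total sum `π 0 + ⋯ + π N = r`. -/
def IsLSPath (N : ℕ) (b : ℕ → ℕ) (r : ℕ) (π : ℕ → ℚ) : Prop :=
  (∀ i, 0 ≤ π i) ∧ (∀ i, N < i → π i = 0) ∧
  (∀ j < N, ∃ k : ℤ, (b j : ℚ) * (∑ i ∈ Finset.range (j + 1), π i) = k) ∧
  (∑ i ∈ Finset.range (N + 1), π i = r)

/-- `SuppLE π π'` says `max supp π ≤ min supp π'`:
every element of the support of `π` is `≤` every element of the support of `π'`. -/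
def SuppLE (π π' : ℕ → ℚ) : Prop := ∀ i j, π i ≠ 0 → π' j ≠ 0 → i ≤ j

theorem finite_setOf_sum_one_div_eq :
    ∀ (n : ℕ) (q : ℚ), {f : Fin n → ℕ | (∀ i, 0 < f i) ∧ ∑ i, (1 : ℚ) / f i = q}.Finite
  | 0, _ => Set.toFinite _
  | n + 1, q => by
    rcases le_or_gt q 0 with hq | hq
    · refine Set.finite_empty.subset fun f ⟨hpos, hsum⟩ => (hq.not_gt ?_).elim
      rw [← hsum]
      exact Finset.sum_pos (fun i _ => by have := hpos i; positivity) univ_nonempty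
    refine Set.Finite.subset (s := ⋃ (j : Fin (n + 1)) (v ∈ range (⌊(n + 1 : ℚ) / q⌋₊ + 1)),
        Fin.insertNth j v '' {g | (∀ i, 0 < g i) ∧ ∑ i, (1 : ℚ) / g i = q - 1 / v})
      (Set.finite_iUnion fun j => (finite_toSet _).biUnion fun v _ =>
        (finite_setOf_sum_one_div_eq n _).image _) ?_
    rintro f ⟨hpos, hsum⟩
    obtain ⟨j, -, hj⟩ : ∃ j ∈ univ, q / (n + 1) ≤ 1 / (f j : ℚ) := by
      refine exists_le_of_sum_le univ_nonempty ?_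
      rw [hsum, sum_const, card_univ, Fintype.card_fin, nsmul_eq_mul]
      push_cast
      field_simp
      rfl
    have hfj : (0 : ℚ) < f j := by exact_mod_cast hpos j
    have hbound : f j ≤ ⌊(n + 1 : ℚ) / q⌋₊ := by
      refine Nat.le_floor ?_
      rw [div_le_div_iff₀ (by positivity) hfj] at hj
      rw [le_div_iff₀ hq]
      linarith
    refine Set.mem_iUnion.2 ⟨j, Set.mem_biUnion (mem_range.2 (Nat.lt_succ_of_le hbound))
      ⟨Fin.removeNth j f, ⟨fun i => hpos _, ?_⟩, Fin.insertNth_self_removeNth j f⟩⟩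
    rw [← hsum, Fin.sum_univ_succAbove _ j]
    simp [Fin.removeNth_apply]

theorem finite_setOf_sum_one_div_eq_intCast (n : ℕ) :
    {f : Fin n → ℕ | (∀ i, 0 < f i) ∧ ∃ k : ℤ, ∑ i, (1 : ℚ) / f i = k}.Finite := by
  refine Set.Finite.subset ((finite_toSet (Icc (0 : ℤ) n)).biUnion fun k _ =>
    finite_setOf_sum_one_div_eq n k) ?_
  rintro f ⟨hpos, k, hk⟩
  have hnonneg : (0 : ℚ) ≤ k := hk ▸ sum_nonneg fun i _ => by positivity
  have hle : (k : ℚ) ≤ n := by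
    rw [← hk]
    refine (sum_le_card_nsmul _ _ 1 fun i _ => ?_).trans (by simp)
    rw [div_le_one (by exact_mod_cast hpos i)]
    exact_mod_cast hpos i
  exact Set.mem_biUnion (mem_Icc.2 ⟨by exact_mod_cast hnonneg, by exact_mod_cast hle⟩)
    ⟨hpos, hk⟩

theorem finite_setOf_forall_lt_le_and_eq (N C c : ℕ) :
    {b : ℕ → ℕ | (∀ i < N, b i ≤ C) ∧ ∀ i, N ≤ i → b i = c}.Finite := by
  refine Set.Finite.of_injOn (f := fun b (i : Fin N) => b i)
    (t := Set.univ.pi fun _ => Set.Iic C) ?_ ?_ (Set.Finite.pi fun _ => Set.finite_Iic C)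
  · rintro b ⟨hle, -⟩ i -
    exact hle i i.isLt
  · rintro b ⟨-, hb⟩ b' ⟨-, hb'⟩ h
    funext i
    by_cases hi : i < N
    · exact congrFun h ⟨i, hi⟩
    · rw [hb i (not_lt.1 hi), hb' i (not_lt.1 hi)]

theorem Mf_pos {b : ℕ → ℕ} (hb : ∀ i, 0 < b i) (i : ℕ) : 0 < Mf b i := by
  refine Nat.lcm_pos ?_ (hb i)
  split_ifs
  exacts [one_pos, hb _]

theorem dvd_Mf_succ (b : ℕ → ℕ) (i : ℕ) : b i ∣ Mf b (i + 1) := by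
  simpa [Mf] using Nat.dvd_lcm_left (b i) (b (i + 1))

theorem stmt16_general (N : ℕ) :
    {b : ℕ → ℕ | (∀ i < N, 0 < b i) ∧ (∀ i, N ≤ i → b i = 1) ∧
      ∃ k : ℤ, ∑ i ∈ Finset.range (N + 1), (1 : ℚ) / (Mf b i : ℚ) = k}.Finite := by
  obtain ⟨G, hG⟩ := (finite_setOf_sum_one_div_eq_intCast (N + 1)).bddAbove
  refine (finite_setOf_forall_lt_le_and_eq N (univ.sup G) 1).subset ?_
  rintro b ⟨hlt, hge, k, hk⟩
  have hb : ∀ i, 0 < b i := fun i =>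
    (lt_or_ge i N).elim (hlt i) fun h => (hge i h).symm ▸ one_pos
  have hM : (fun i : Fin (N + 1) => Mf b i) ≤ G :=
    hG ⟨fun i => Mf_pos hb i, ⟨k, by rwa [Fin.sum_univ_eq_sum_range (fun i => (1 : ℚ) / Mf b i)]⟩⟩
  refine ⟨fun i hi => ?_, hge⟩
  calc b i ≤ Mf b (i + 1) := Nat.le_of_dvd (Mf_pos hb _) (dvd_Mf_succ b i)
    _ ≤ G ⟨i + 1, by omega⟩ := hM ⟨i + 1, by omega⟩
    _ ≤ univ.sup G := le_sup (mem_univ _)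

/-- For each fixed `N ≥ 1`, there are only finitely many sets of bonds
`b : {0,…,N-1} → ℤ_{>0}` (extended by the convention `b_i = 1` for `i ≥ N`) such that
`1/M_0 + 1/M_1 + ⋯ + 1/M_N ∈ ℤ`, i.e. satisfying the necessary condition for the
discrete LS algebra to be Gorenstein. -/
theorem stmt16 (N : ℕ) (hN : 1 ≤ N) :
    {b : ℕ → ℕ | (∀ i < N, 0 < b i) ∧ (∀ i, N ≤ i → b i = 1) ∧
      ∃ k : ℤ, ∑ i ∈ Finset.range (N + 1), (1 : ℚ) / (Mf b i : ℚ) = k}.Finite :=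
  stmt16_general N
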